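/- Let Λ = ℤω₁ + ℤω₂ be a lattice in ℂ with fundamental parallelogram Π = {sω₁ + tω₂ | s, t ∈ [0,1)}, let p be an integer greater than 1, and let e : ℂ → ℤ be a discretely supported Λ-periodic function with ∑_{z ∈ Π} e(z) = 0. Define d(z) = e(pz) − e(z). Then ∑_{z ∈ Π} z·d(z) = (p − 1)·∑_{z ∈ Π} z·e(z). -/

import Mathlib

/-!
Scaling by `p` maps `Π` bijectively onto `pΠ`, which is tiled by the `p²` translates `Π + λ`,
`λ = mω₁ + nω₂` with `0 ≤ m, n < p`. By periodicity
`∑_{w ∈ Π + λ} w e(w) = ∑_{u ∈ Π} (u + λ) e(u) = ∑_{u ∈ Π} u e(u)`, the `λ`-term vanishing because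
`∑_{u ∈ Π} e(u) = 0`. Hence `p ∑_{z ∈ Π} z e(pz) = p² ∑_{z ∈ Π} z e(z)`, and subtracting
`∑_{z ∈ Π} z e(z)` gives the claim. The tiling argument works verbatim for the fundamental domain
of any lattice in a real vector space of dimension `n`, with `p²` replaced by `pⁿ`.
-/

open Filter Function

/-- `d` is discretely supported: its support has no accumulation points in `ℂ`. -/
def DiscretelySupported (d : ℂ → ℤ) : Prop :=
  ∀ z : ℂ, ¬ AccPt z (𝓟 (Function.support d))

/-- `d` is `Λ`-periodic. -/
def IsPeriodic (Λ : Set ℂ) (d : ℂ → ℤ) : Prop :=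
  ∀ z : ℂ, ∀ l ∈ Λ, d (z + l) = d z

open Set Submodule

theorem finsum_mem_sub_distrib' {α G : Type*} [AddCommGroup G] {f g : α → G} {s : Set α}
    (hf : (s ∩ support f).Finite) (hg : (s ∩ support g).Finite) :
    ∑ᶠ i ∈ s, (f i - g i) = ∑ᶠ i ∈ s, f i - ∑ᶠ i ∈ s, g i := by
  have hfg : (s ∩ support fun i => f i - g i).Finite := (hf.union hg).subset fun i ⟨hi, hne⟩ =>
    (support_sub f g hne).imp (⟨hi, ·⟩) (⟨hi, ·⟩)
  rw [eq_sub_iff_add_eq, ← finsum_mem_add_distrib' hfg hg]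
  simp only [sub_add_cancel]

namespace ZSpan

variable {E : Type*} [NormedAddCommGroup E] [NormedSpace ℝ E]

section Subdivision

variable {ι : Type*} [Fintype ι] (b : Module.Basis ι ℝ E) {p : ℕ}

noncomputable def gridVector (k : ι → Fin p) : E := ∑ i, ((k i : ℕ) : ℝ) • b i

variable (p) in
/-- On `{k} × fundamentalDomain b` this is the affine contraction onto the subcell of
`fundamentalDomain b` with corner `p⁻¹ • gridVector b k`. -/
noncomputable def subdivisionMap (x : (ι → Fin p) × E) : E := (p : ℝ)⁻¹ • (x.2 + gridVector b x.1)

theorem repr_gridVector (k : ι → Fin p) (i : ι) : b.repr (gridVector b k) i = k i := by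
  rw [gridVector, b.repr_sum_self]

theorem gridVector_mem_span (k : ι → Fin p) : gridVector b k ∈ span ℤ (range b) :=
  sum_mem fun i _ => by
    rw [Nat.cast_smul_eq_nsmul]
    exact nsmul_mem (subset_span (mem_range_self i)) _

theorem nsmul_subdivisionMap (hp : p ≠ 0) (x : (ι → Fin p) × E) :
    p • subdivisionMap b p x = x.2 + gridVector b x.1 := by
  rw [subdivisionMap, ← Nat.cast_smul_eq_nsmul ℝ, smul_inv_smul₀ (Nat.cast_ne_zero.2 hp)]

theorem bijOn_subdivisionMap (hp : p ≠ 0) :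
    BijOn (subdivisionMap b p) (univ ×ˢ fundamentalDomain b) (fundamentalDomain b) := by
  have hpR : (0 : ℝ) < p := Nat.cast_pos.2 (Nat.pos_of_ne_zero hp)
  have repr_add (u : E) (k : ι → Fin p) (i : ι) :
      b.repr (u + gridVector b k) i = b.repr u i + k i := by
    rw [map_add, Finsupp.add_apply, repr_gridVector]
  refine ⟨?mapsTo, ?injOn, ?surjOn⟩
  case mapsTo =>
    rintro ⟨k, u⟩ ⟨-, hu⟩ i
    have hk : ((k i : ℕ) : ℝ) + 1 ≤ p := by exact_mod_cast (k i).isLt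
    simp only [subdivisionMap, map_smul, Finsupp.smul_apply, smul_eq_mul, repr_add, mem_Ico]
    constructor
    · exact mul_nonneg (by positivity) (add_nonneg (hu i).1 (Nat.cast_nonneg _))
    · rw [inv_mul_lt_iff₀ hpR]; linarith [(hu i).2]
  case injOn =>
    rintro ⟨k, u⟩ ⟨-, hu⟩ ⟨k', u'⟩ ⟨-, hu'⟩ h
    have h' : u + gridVector b k = u' + gridVector b k' := by
      simpa only [nsmul_subdivisionMap b hp] using congrArg (p • ·) h
    have hk : k = k' := funext fun i => Fin.ext <| by
      have hi := congrArg (fun v => ⌊b.repr v i⌋₊) h'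
      simp only [repr_add] at hi
      rwa [Nat.floor_add_natCast (hu i).1, Nat.floor_add_natCast (hu' i).1,
        Nat.floor_eq_zero.2 (hu i).2, Nat.floor_eq_zero.2 (hu' i).2, zero_add, zero_add] at hi
    subst hk
    simpa using h'
  case surjOn =>
    intro z hz
    have hpz (i : ι) : 0 ≤ p * b.repr z i := mul_nonneg hpR.le (hz i).1
    let k : ι → Fin p := fun i => ⟨⌊p * b.repr z i⌋₊, by
      rw [Nat.floor_lt (hpz i)]
      simpa using mul_lt_mul_of_pos_left (hz i).2 hpR⟩
    refine ⟨(k, p • z - gridVector b k), ⟨mem_univ _, fun i => ?_⟩, ?_⟩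
    · simp only [map_sub, map_nsmul, Finsupp.sub_apply, Finsupp.smul_apply, nsmul_eq_mul,
        repr_gridVector, k, mem_Ico, sub_nonneg]
      exact ⟨Nat.floor_le (hpz i), by linarith [Nat.lt_floor_add_one (p * b.repr z i)]⟩
    · rw [subdivisionMap, sub_add_cancel, ← Nat.cast_smul_eq_nsmul ℝ,
        inv_smul_smul₀ (Nat.cast_ne_zero.2 hp)]

variable {e : E → ℤ}

theorem comp_nsmul_subdivisionMap (hp : p ≠ 0)
    (hper : ∀ z, ∀ l ∈ span ℤ (range b), e (z + l) = e z) (x : (ι → Fin p) × E) :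
    e (p • subdivisionMap b p x) = e x.2 := by
  rw [nsmul_subdivisionMap b hp, hper _ _ (gridVector_mem_span b x.1)]

theorem finite_inter_support_comp_nsmul (hp : p ≠ 0)
    (hper : ∀ z, ∀ l ∈ span ℤ (range b), e (z + l) = e z)
    (hfin : (fundamentalDomain b ∩ support e).Finite) :
    (fundamentalDomain b ∩ support fun z => e (p • z)).Finite := by
  refine ((finite_univ.prod hfin).image (subdivisionMap b p)).subset ?_
  rintro z ⟨hz, hez⟩
  obtain ⟨x, ⟨-, hx⟩, rfl⟩ := (bijOn_subdivisionMap b hp).surjOn hz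
  refine ⟨x, ⟨mem_univ _, hx, ?_⟩, rfl⟩
  rwa [mem_support, comp_nsmul_subdivisionMap b hp hper] at hez

theorem finsum_smul_nsmul_fundamentalDomain (hp : p ≠ 0)
    (hper : ∀ z, ∀ l ∈ span ℤ (range b), e (z + l) = e z)
    (hfin : (fundamentalDomain b ∩ support e).Finite)
    (hdeg : ∑ᶠ z ∈ fundamentalDomain b, e z = 0) :
    ∑ᶠ z ∈ fundamentalDomain b, e (p • z) • (p • z) =
      p ^ Fintype.card ι • ∑ᶠ z ∈ fundamentalDomain b, e z • z := by
  classical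
  rw [finsum_mem_eq_sum e hfin] at hdeg
  set T := hfin.toFinset
  have hT : (T : Set E) ⊆ fundamentalDomain b := fun z hz => (hfin.mem_toFinset.1 hz).1
  have hS : ∑ᶠ z ∈ fundamentalDomain b, e z • z = ∑ u ∈ T, e u • u :=
    finsum_mem_eq_sum_of_subset _ (fun z ⟨hz, hne⟩ =>
      hfin.mem_toFinset.2 ⟨hz, fun h => hne (by simp [h])⟩) hT
  calc ∑ᶠ z ∈ fundamentalDomain b, e (p • z) • (p • z)
      = ∑ᶠ x ∈ univ ×ˢ fundamentalDomain b, e x.2 • (x.2 + gridVector b x.1) := by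
        refine (finsum_mem_eq_of_bijOn _ (bijOn_subdivisionMap b hp) fun x _ => ?_).symm
        rw [comp_nsmul_subdivisionMap b hp hper, nsmul_subdivisionMap b hp]
    _ = ∑ x ∈ Finset.univ ×ˢ T, e x.2 • (x.2 + gridVector b x.1) := by
        refine finsum_mem_eq_sum_of_subset _ (fun x ⟨⟨_, hx⟩, hne⟩ => ?_) ?_
        · exact Finset.mem_product.2 ⟨Finset.mem_univ _,
            hfin.mem_toFinset.2 ⟨hx, fun h => hne (by simp [h])⟩⟩
        · rw [Finset.coe_product, Finset.coe_univ]
          exact prod_mono subset_rfl hT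
    _ = ∑ k : (ι → Fin p), (∑ u ∈ T, e u • u + (∑ u ∈ T, e u) • gridVector b k) := by
        simp only [Finset.sum_product, smul_add, Finset.sum_add_distrib, Finset.sum_smul]
    _ = p ^ Fintype.card ι • ∑ᶠ z ∈ fundamentalDomain b, e z • z := by
        rw [hS]
        simp only [hdeg, zero_smul, add_zero, Finset.sum_const, Finset.card_univ, Fintype.card_fun,
          Fintype.card_fin]

end Subdivision

theorem fundamentalDomain_fin_two (b : Module.Basis (Fin 2) ℝ E) :
    fundamentalDomain b = {z | ∃ s t : ℝ, s ∈ Ico (0 : ℝ) 1 ∧ t ∈ Ico (0 : ℝ) 1 ∧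
      z = s • b 0 + t • b 1} := by
  ext z
  constructor
  · intro hz
    exact ⟨_, _, hz 0, hz 1, by simpa only [Fin.sum_univ_two] using (b.sum_repr z).symm⟩
  · rintro ⟨s, t, hs, ht, rfl⟩
    have hst : s • b 0 + t • b 1 = ∑ i, ![s, t] i • b i := by simp [Fin.sum_univ_two]
    rw [mem_fundamentalDomain, hst, b.repr_sum_self, Fin.forall_fin_two]
    exact ⟨hs, ht⟩

theorem finsum_mul_coboundary (b : Module.Basis (Fin 2) ℝ ℂ) {p : ℕ} (hp : p ≠ 0) {e : ℂ → ℤ}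
    (hper : ∀ z, ∀ l ∈ span ℤ (range b), e (z + l) = e z)
    (hfin : (fundamentalDomain b ∩ support e).Finite)
    (hdeg : ∑ᶠ z ∈ fundamentalDomain b, e z = 0) :
    ∑ᶠ z ∈ fundamentalDomain b, z * ((e (p * z) - e z : ℤ) : ℂ) =
      (p - 1) * ∑ᶠ z ∈ fundamentalDomain b, z * (e z : ℂ) := by
  set D := fundamentalDomain b
  have hscaled := finsum_smul_nsmul_fundamentalDomain b hp hper hfin hdeg
  have hfin_p := finite_inter_support_comp_nsmul b hp hper hfin
  simp only [zsmul_eq_mul, nsmul_eq_mul, Fintype.card_fin] at hscaled hfin_p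
  have hX : ∑ᶠ z ∈ D, z * (e (p * z) : ℂ) = p * ∑ᶠ z ∈ D, z * (e z : ℂ) := by
    refine mul_left_cancel₀ (Nat.cast_ne_zero.2 hp : (p : ℂ) ≠ 0) ?_
    calc (p : ℂ) * ∑ᶠ z ∈ D, z * (e (p * z) : ℂ) = ∑ᶠ z ∈ D, (e (p * z) : ℂ) * (p * z) := by
          rw [mul_finsum_mem]
          exact finsum_mem_congr rfl fun z _ => by ring
      _ = p ^ 2 * ∑ᶠ z ∈ D, (e z : ℂ) * z := by exact_mod_cast hscaled
      _ = p * (p * ∑ᶠ z ∈ D, z * (e z : ℂ)) := by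
          simp only [mul_comm (e _ : ℂ)]
          ring
  have hfinX : (D ∩ support fun z => z * (e (p * z) : ℂ)).Finite :=
    hfin_p.subset fun z ⟨hz, hne⟩ => ⟨hz, fun h => hne (by simp [h])⟩
  have hfinS : (D ∩ support fun z => z * (e z : ℂ)).Finite :=
    hfin.subset fun z ⟨hz, hne⟩ => ⟨hz, fun h => hne (by simp [h])⟩
  simp only [Int.cast_sub, mul_sub]
  rw [finsum_mem_sub_distrib' hfinX hfinS, hX]
  ring

end ZSpan

theorem DiscretelySupported.finite_inter_support {e : ℂ → ℤ} (he : DiscretelySupported e)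
    {s : Set ℂ} (hs : Bornology.IsBounded s) : (s ∩ support e).Finite := by
  by_contra hinf
  obtain ⟨x, -, hx⟩ := Set.Infinite.exists_accPt_of_subset_isCompact hinf hs.isCompact_closure
    (inter_subset_left.trans subset_closure)
  exact he x (hx.mono (principal_mono.2 inter_subset_right))

/-- **Abel sum computation.** Let `Λ = ℤω₁ + ℤω₂` be a lattice with fundamental
parallelogram `Par = {sω₁ + tω₂ | s, t ∈ [0,1)}`, `p > 1` an integer and `e : ℂ → ℤ`
discretely supported and `Λ`-periodic with `∑_{z ∈ Par} e(z) = 0`.  Set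
`d(z) = e(pz) - e(z)`.  Then `∑_{z ∈ Par} z·d(z) = (p - 1) ∑_{z ∈ Par} z·e(z)`. -/
theorem abel_sum_of_coboundary
    (ω₁ ω₂ : ℂ) (hω : LinearIndependent ℝ ![ω₁, ω₂])
    (Λ : Set ℂ) (hΛ : Λ = {z : ℂ | ∃ m n : ℤ, z = (m : ℂ) * ω₁ + (n : ℂ) * ω₂})
    (Par : Set ℂ)
    (hPar : Par = {z : ℂ | ∃ s t : ℝ, s ∈ Set.Ico (0 : ℝ) 1 ∧ t ∈ Set.Ico (0 : ℝ) 1 ∧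
      z = (s : ℂ) * ω₁ + (t : ℂ) * ω₂})
    (p : ℤ) (hp : 1 < p)
    (e : ℂ → ℤ) (he : DiscretelySupported e) (hper : IsPeriodic Λ e)
    (hdeg : ∑ᶠ z ∈ Par, e z = 0)
    (d : ℂ → ℤ) (hd : ∀ z : ℂ, d z = e ((p : ℂ) * z) - e z) :
    ∑ᶠ z ∈ Par, z * (d z : ℂ) = ((p : ℂ) - 1) * ∑ᶠ z ∈ Par, z * (e z : ℂ) := by
  set B := basisOfLinearIndependentOfCardEqFinrank hω (by simp [Complex.finrank_real_complex])
  have hB : ⇑B = ![ω₁, ω₂] := coe_basisOfLinearIndependentOfCardEqFinrank _ _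
  have hParB : Par = ZSpan.fundamentalDomain B := by
    rw [hPar, ZSpan.fundamentalDomain_fin_two]
    simp [hB, Complex.real_smul]
  have hperB : ∀ z, ∀ l ∈ span ℤ (range B), e (z + l) = e z := by
    intro z l hl
    rw [hB, Matrix.range_cons_cons_empty, mem_span_pair] at hl
    obtain ⟨m, n, rfl⟩ := hl
    exact hper z _ (hΛ ▸ ⟨m, n, by simp [zsmul_eq_mul]⟩)
  lift p to ℕ using by omega
  subst hParB
  have hfin := he.finite_inter_support (ZSpan.fundamentalDomain_isBounded B)
  simp only [hd, Int.cast_natCast]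
  exact ZSpan.finsum_mul_coboundary B (by omega) hperB hfin hdeg
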